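/- In a dual weak brace S, if I is an ideal of S, then x · a ∈ I for all x ∈ I and a ∈ S, where x · a := -x + x ∘ a - a. -/

import Mathlib

/-- A weak brace: `(S,+)` and `(S,∘)` are inverse semigroups satisfying
`a ∘ (b + c) = a ∘ b - a + a ∘ c` and `a ∘ a⁻ = -a + a`. -/
class WeakBrace (S : Type*) where
  add : S → S → S
  mul : S → S → S
  neg : S → S
  inv : S → S
  add_assoc : ∀ a b c : S, add (add a b) c = add a (add b c)
  mul_assoc : ∀ a b c : S, mul (mul a b) c = mul a (mul b c)
  add_reg : ∀ a : S, add (add a (neg a)) a = a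
  neg_reg : ∀ a : S, add (add (neg a) a) (neg a) = neg a
  neg_unique : ∀ a x : S, add (add a x) a = a → add (add x a) x = x → x = neg a
  mul_reg : ∀ a : S, mul (mul a (inv a)) a = a
  inv_reg : ∀ a : S, mul (mul (inv a) a) (inv a) = inv a
  inv_unique : ∀ a x : S, mul (mul a x) a = a → mul (mul x a) x = x → x = inv a
  distrib : ∀ a b c : S, mul a (add b c) = add (add (mul a b) (neg a)) (mul a c)
  link : ∀ a : S, mul a (inv a) = add (neg a) a

/-- A dual weak brace: a weak brace whose multiplicative semigroup is Clifford. -/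
class DualWeakBrace (S : Type*) extends WeakBrace S where
  clifford : ∀ a : S, WeakBrace.mul a (WeakBrace.inv a) = WeakBrace.mul (WeakBrace.inv a) a

namespace WeakBrace

variable {S : Type*} [WeakBrace S]

/-- `λ_a(b) = -a + a ∘ b`. -/
def lam (a b : S) : S := add (neg a) (mul a b)

/-- `ρ_b(a) = (-a + a ∘ b)⁻ ∘ a ∘ b`. -/
def rho (b a : S) : S := mul (mul (inv (lam a b)) a) b

/-- `a · b = -a + a ∘ b - b`. -/
def cdot (a b : S) : S := add (add (neg a) (mul a b)) (neg b)

/-- `a⁰ = a - a`. -/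
def sq (a : S) : S := add a (neg a)

/-- Additive idempotent (the sets of idempotents of `+` and `∘` coincide). -/
def IsIdem (e : S) : Prop := add e e = e

/-- `[a,b]₊ = -a - b + a + b`. -/
def brkt (a b : S) : S := add (add (add (neg a) (neg b)) a) b

/-- `I` is a full inverse subsemigroup of `(S,+)`. -/
def IsFullAddSub (I : Set S) : Prop :=
  (∀ e : S, IsIdem e → e ∈ I) ∧ (∀ x ∈ I, ∀ y ∈ I, add x y ∈ I) ∧ (∀ x ∈ I, neg x ∈ I)

/-- `I` is a normal subsemigroup of `(S,+)`. -/
def IsNormalAdd (I : Set S) : Prop :=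
  IsFullAddSub I ∧ ∀ a : S, ∀ x ∈ I, add (add (neg a) x) a ∈ I

/-- `I` is a normal subsemigroup of `(S,∘)`. -/
def IsNormalMul (I : Set S) : Prop :=
  (∀ e : S, IsIdem e → e ∈ I) ∧ (∀ x ∈ I, ∀ y ∈ I, mul x y ∈ I) ∧ (∀ x ∈ I, inv x ∈ I) ∧
    ∀ a : S, ∀ x ∈ I, mul (mul (inv a) x) a ∈ I

/-- `I` is a left ideal of the weak brace `S`. -/
def IsLeftIdeal (I : Set S) : Prop :=
  IsFullAddSub I ∧ ∀ a : S, ∀ x ∈ I, lam a x ∈ I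

/-- `I` is an ideal of the weak brace `S`. -/
def IsIdeal (I : Set S) : Prop :=
  IsNormalAdd I ∧ (∀ a : S, ∀ x ∈ I, lam a x ∈ I) ∧ IsNormalMul I

/-- The socle `Soc(S)`. -/
def Soc (S : Type*) [WeakBrace S] : Set S :=
  {a | ∀ b : S, add a b = mul a b ∧ add a b = add b a}

/-- The annihilator `Ann(S)`. -/
def Ann (S : Type*) [WeakBrace S] : Set S :=
  {a | ∀ b : S, add a b = add b a ∧ add a b = mul a b ∧ mul a b = mul b a}

/-- The congruence `a ∼_I b ⟺ a⁰ = b⁰ and -a + b ∈ I` associated to an ideal `I`. -/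
def simI (I : Set S) (a b : S) : Prop := sq a = sq b ∧ add (neg a) b ∈ I

/-- Membership in the inverse subsemigroup of `(S,+)` generated by a set `X`. -/
inductive genAdd (X : Set S) : S → Prop
  | base : ∀ x ∈ X, genAdd X x
  | add : ∀ a b : S, genAdd X a → genAdd X b → genAdd X (add a b)
  | neg : ∀ a : S, genAdd X a → genAdd X (neg a)

/-- `X · Y`: the additive inverse subsemigroup generated by the elements `x · y`. -/
def cdotSet (X Y : Set S) : Set S :=
  {s | genAdd {z | ∃ x ∈ X, ∃ y ∈ Y, z = cdot x y} s}

/-- `S^(n)` for `n ≥ 1`: `S^(1) = S`, `S^(n+1) = S^(n) · S`. -/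
def Spow (S : Type*) [WeakBrace S] : ℕ → Set S
  | 0 => Set.univ
  | 1 => Set.univ
  | (n+2) => cdotSet (Spow S (n+1)) Set.univ

end WeakBrace

/-!
Conjugating `x ∈ I` by `a` in `(S,∘)` gives `y = a⁻ ∘ x ∘ a ∈ I`, and since the idempotents
of the Clifford semigroup `(S,∘)` are central, `x ∘ a = a ∘ y`. In every weak brace
`a + λ_a(b) = a ∘ b`, so conjugating `λ_a(y) ∈ I` by `-a` in `(S,+)` shows `a ∘ y - a ∈ I`,
whence `x · a = -x + (a ∘ y - a) ∈ I`.
-/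

structure IsInverseSemigroup {S : Type*} (op : S → S → S) (iv : S → S) : Prop where
  assoc : ∀ a b c : S, op (op a b) c = op a (op b c)
  op_iv_op : ∀ a : S, op (op a (iv a)) a = a
  iv_op_iv : ∀ a : S, op (op (iv a) a) (iv a) = iv a
  eq_iv : ∀ a x : S, op (op a x) a = a → op (op x a) x = x → x = iv a

namespace IsInverseSemigroup

variable {S : Type*} {op : S → S → S} {iv : S → S}

theorem iv_iv (h : IsInverseSemigroup op iv) (a : S) : iv (iv a) = a :=
  (h.eq_iv (iv a) a (h.iv_op_iv a) (h.op_iv_op a)).symm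

theorem iv_eq_self (h : IsInverseSemigroup op iv) {e : S} (he : op e e = e) : iv e = e := by
  have hee : op (op e e) e = e := by rw [he, he]
  exact (h.eq_iv e e hee hee).symm

theorem op_iv_idem (h : IsInverseSemigroup op iv) (a : S) :
    op (op a (iv a)) (op a (iv a)) = op a (iv a) := by
  rw [← h.assoc, h.op_iv_op]

theorem iv_op_idem (h : IsInverseSemigroup op iv) (a : S) :
    op (op (iv a) a) (op (iv a) a) = op (iv a) a := by
  rw [← h.assoc, h.iv_op_iv]

theorem idem_op_of_idem (h : IsInverseSemigroup op iv) {e f : S} (he : op e e = e)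
    (hf : op f f = f) :
    op (op e f) (op e f) = op e f := by
  have he' (t : S) : op e (op e t) = op e t := by rw [← h.assoc, he]
  have hf' (t : S) : op f (op f t) = op f t := by rw [← h.assoc, hf]
  set x := iv (op e f)
  -- `f x e` is an inverse of `e f` equal to its own square, so `x = iv (e f)` is idempotent
  have hfxe : op (op (op f (op x e)) (op e f)) (op f (op x e)) = op f (op x e) := by
    have hx := congrArg (fun w => op f (op w e)) (h.iv_op_iv (op e f))
    simp only [h.assoc, he', hf'] at hx ⊢
    exact hx
  have hx : op f (op x e) = x := by
    refine h.eq_iv _ _ ?_ hfxe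
    have hef := h.op_iv_op (op e f)
    simp only [h.assoc, he', hf'] at hef ⊢
    exact hef
  have hxx : op x x = x := by
    rw [← hx]
    simpa only [h.assoc, he', hf'] using hfxe
  rw [← h.iv_iv (op e f), h.iv_eq_self hxx, hxx]

theorem idem_comm (h : IsInverseSemigroup op iv) {e f : S} (he : op e e = e) (hf : op f f = f) :
    op e f = op f e := by
  have he' (t : S) : op e (op e t) = op e t := by rw [← h.assoc, he]
  have hf' (t : S) : op f (op f t) = op f t := by rw [← h.assoc, hf]
  have hef := h.idem_op_of_idem he hf
  have hfe := h.idem_op_of_idem hf he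
  have h1 : op (op (op e f) (op f e)) (op e f) = op e f := by
    simp only [h.assoc, he', hf'] at hef ⊢
    exact hef
  have h2 : op (op (op f e) (op e f)) (op f e) = op f e := by
    simp only [h.assoc, he', hf'] at hfe ⊢
    exact hfe
  rw [h.eq_iv _ _ h1 h2, h.iv_eq_self hef]

theorem iv_op (h : IsInverseSemigroup op iv) (a b : S) : iv (op a b) = op (iv b) (iv a) := by
  have hcomm := h.idem_comm (h.op_iv_idem b) (h.iv_op_idem a)
  refine (h.eq_iv _ _ ?_ ?_).symm
  · calc op (op (op a b) (op (iv b) (iv a))) (op a b)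
        = op a (op (op (op b (iv b)) (op (iv a) a)) b) := by simp only [h.assoc]
      _ = op (op (op a (iv a)) a) (op (op b (iv b)) b) := by rw [hcomm]; simp only [h.assoc]
      _ = op a b := by rw [h.op_iv_op, h.op_iv_op]
  · calc op (op (op (iv b) (iv a)) (op a b)) (op (iv b) (iv a))
        = op (iv b) (op (op (op (iv a) a) (op b (iv b))) (iv a)) := by simp only [h.assoc]
      _ = op (op (op (iv b) b) (iv b)) (op (op (iv a) a) (iv a)) := by
          rw [← hcomm]; simp only [h.assoc]
      _ = op (iv b) (iv a) := by rw [h.iv_op_iv, h.iv_op_iv]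

theorem idem_central (h : IsInverseSemigroup op iv) (hc : ∀ a : S, op a (iv a) = op (iv a) a)
    {e : S} (he : op e e = e) (t : S) : op e t = op t e := by
  have hconj : op e t = op t (op (op (iv t) e) t) :=
    calc op e t = op (op e (op t (iv t))) t := by rw [h.assoc, h.op_iv_op]
      _ = op (op (op t (iv t)) e) t := by rw [h.idem_comm he (h.op_iv_idem t)]
      _ = op t (op (op (iv t) e) t) := by simp only [h.assoc]
  have hiv : iv (op e t) = op (iv t) e := by rw [h.iv_op, h.iv_eq_self he]
  have hswap : op (op (iv t) e) t = op (op (iv t) t) e :=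
    calc op (op (iv t) e) t = op (iv (op e t)) (op e t) := by
          rw [hiv, h.assoc, h.assoc, ← h.assoc e e, he]
      _ = op (op e t) (iv (op e t)) := (hc _).symm
      _ = op (op e (op t (iv t))) e := by rw [hiv]; simp only [h.assoc]
      _ = op e (op t (iv t)) := by
          rw [h.assoc, h.idem_comm (h.op_iv_idem t) he, ← h.assoc, he]
      _ = op (op (iv t) t) e := by rw [hc, h.idem_comm he (h.iv_op_idem t)]
  rw [hconj, hswap, ← h.assoc, ← h.assoc, h.op_iv_op]

end IsInverseSemigroup

namespace WeakBrace

section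

variable {S : Type*} [WeakBrace S]

theorem isInverseSemigroup_add : IsInverseSemigroup (add : S → S → S) neg :=
  ⟨add_assoc, add_reg, neg_reg, neg_unique⟩

theorem isInverseSemigroup_mul : IsInverseSemigroup (mul : S → S → S) inv :=
  ⟨mul_assoc, mul_reg, inv_reg, inv_unique⟩

theorem isIdem_inv_mul (a : S) : IsIdem (mul (inv a) a) := by
  have h := isInverseSemigroup_add.iv_op_idem (inv a)
  rwa [← link, isInverseSemigroup_mul.iv_iv] at h

theorem sq_add_mul_add_neg {f : S} (hf : IsIdem f) (a : S) :
    add (sq a) (add (mul a f) (neg a)) = add (mul a f) (neg a) := by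
  have ha : mul a (mul (inv a) a) = a := by rw [← mul_assoc, mul_reg]
  calc add (sq a) (add (mul a f) (neg a))
      = add (add (add (mul a (mul (inv a) a)) (neg a)) (mul a f)) (neg a) := by
        rw [ha, sq]; simp only [add_assoc]
    _ = add (mul a (add f (mul (inv a) a))) (neg a) := by
        rw [← distrib, isInverseSemigroup_add.idem_comm (isIdem_inv_mul a) hf]
    _ = add (mul a f) (neg a) := by
        rw [distrib, ha, add_assoc, add_assoc, ← add_assoc (neg a), neg_reg]

theorem add_lam (a b : S) : add a (lam a b) = mul a b := by
  have hb : IsIdem (sq b) := isInverseSemigroup_add.op_iv_idem b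
  have hsb : add (sq b) b = b := add_reg b
  calc add a (lam a b) = add (sq a) (mul a b) := (add_assoc _ _ _).symm
    _ = add (add (sq a) (add (mul a (sq b)) (neg a))) (mul a b) := by
        rw [add_assoc, ← distrib, hsb]
    _ = mul a b := by rw [sq_add_mul_add_neg hb, ← distrib, hsb]

theorem IsIdeal.mul_add_neg_mem {I : Set S} (hI : IsIdeal I) (a : S) {y : S} (hy : y ∈ I) :
    add (mul a y) (neg a) ∈ I := by
  have h := hI.1.2 (neg a) (lam a y) (hI.2.1 a y hy)
  rwa [isInverseSemigroup_add.iv_iv, add_lam] at h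

end

theorem mul_eq_mul_conj {S : Type*} [DualWeakBrace S] (x a : S) :
    mul x a = mul a (mul (mul (inv a) x) a) := by
  have hcentral := isInverseSemigroup_mul.idem_central DualWeakBrace.clifford
    (isInverseSemigroup_mul.op_iv_idem a) x
  calc mul x a = mul (mul x (mul a (inv a))) a := by rw [mul_assoc x, mul_reg]
    _ = mul a (mul (mul (inv a) x) a) := by rw [← hcentral]; simp only [mul_assoc]

end WeakBrace

open WeakBrace
theorem stmt12 {S : Type*} [DualWeakBrace S] (I : Set S) (hI : IsIdeal I) :
    ∀ x ∈ I, ∀ a : S, cdot x a ∈ I := by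
  intro x hx a
  have ⟨⟨⟨_, hadd, hneg⟩, _⟩, _, _, _, _, hconj⟩ := hI
  have hcdot : cdot x a = add (neg x) (add (mul a (mul (mul (inv a) x) a)) (neg a)) := by
    rw [cdot, ← mul_eq_mul_conj, WeakBrace.add_assoc]
  rw [hcdot]
  exact hadd _ (hneg x hx) _ (hI.mul_add_neg_mem a (hconj a x hx))
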